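/- Suppose the supports of two probability measures σ_B and σ_G on ℝ (the price distributions of the bad and good type of a firm) are such that every common price P satisfies: demand at the bad type's prices is weakly larger and prices are ordered P_G ≥ P_B with equality iff demands are equal (as in the incentive-constraint lemma). Then the supports of σ_B and σ_G intersect in at most one point. -/
import Mathlib


open MeasureTheory

/-- The (topological) support of a measure on ℝ: points all of whose
    neighbourhoods have positive measure. -/
def measSupport (μ : MeasureTheory.Measure ℝ) : Set ℝ :=
  {x : ℝ | ∀ U ∈ nhds x, μ U ≠ 0}

/-- If every bad-type price P_B and good-type price P_G in the
    respective supports satisfy D(P_G) ≤ D(P_B), P_G ≥ P_B, and P_G = P_B iff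
    the demands coincide, then the two supports share at most one point. -/
theorem stmt14 (σB σG : MeasureTheory.Measure ℝ)
    [IsProbabilityMeasure σB] [IsProbabilityMeasure σG]
    (D : ℝ → ℝ)
    (hyp : ∀ PB ∈ measSupport σB, ∀ PG ∈ measSupport σG,
      D PG ≤ D PB ∧ PG ≥ PB ∧ (PG = PB ↔ D PG = D PB)) :
    Set.Subsingleton (measSupport σB ∩ measSupport σG) := by
  intro x hx y hy
  have h1 := hyp x hx.1 y hy.2
  have h2 := hyp y hy.1 x hx.2
  linarith [h1.2.1, h2.2.1]
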